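/- Theorem 7.5, parts (i) and (iii): The homomorphism $\phi_0:\mathcal{A}_{0+}\to\overline{A}_1$ determined by $\phi_0(\alpha_{ij})=s_i-s_j$ is injective, hence an isomorphism of $\mathcal{A}_{0+}$ onto $B$; moreover, for any fixed $0\in I$, $\overline{A}_1=B\oplus s_0B$ as complex vector spaces, i.e., $B\cap s_0B=0$ and $B+s_0B=\overline{A}_1$. -/
import Mathlib


/-!
Theorem 7.5, parts (i) and (iii). With `𝒜_{0+}`, `Ā₁`, `B` as below (see Proposition 7.3:
the homomorphism `φ₀ : 𝒜_{0+} → Ā₁` with `φ₀(α_{ij}) = s_i - s_j` exists and is unique,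
and its image is `B`), `φ₀` is injective, hence an isomorphism of `𝒜_{0+}` onto `B`;
moreover for any fixed `o ∈ I`, `Ā₁ = B ⊕ s_o B` as complex vector spaces, i.e.
`B + s_o B = Ā₁` and `B ∩ s_o B = 0`.
-/

noncomputable section

namespace EvenAdd

variable {I : Type*} [DecidableEq I]

/-- Index type for the generators `α_{ij}`, `i ≠ j`. -/
abbrev Gens (I : Type*) := {p : I × I // p.1 ≠ p.2}

/-- The generator `α_{ij}` of the free algebra. -/
def agen (i j : I) (h : i ≠ j) : FreeAlgebra ℂ (Gens I) := FreeAlgebra.ι ℂ ⟨(i, j), h⟩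

/-- The defining relations of `𝒜_{0+}`: `α_{ij} + α_{ji} = 0`,
`α_{ij} + α_{jk} + α_{ki} = 0`, and `α_{ij}^{m_{ij}} = 0` when `m_{ij} < ∞`. -/
inductive Rel (M : CoxeterMatrix I) :
    FreeAlgebra ℂ (Gens I) → FreeAlgebra ℂ (Gens I) → Prop
  | anti (i j : I) (h : i ≠ j) : Rel M (agen i j h + agen j i h.symm) 0
  | triangle (i j k : I) (hij : i ≠ j) (hjk : j ≠ k) (hki : k ≠ i) :
      Rel M (agen i j hij + agen j k hjk + agen k i hki) 0
  | nil (i j : I) (h : i ≠ j) (hm : M i j ≠ 0) : Rel M (agen i j h ^ (M i j)) 0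

/-- The algebra `𝒜_{0+}`. -/
abbrev A0 (M : CoxeterMatrix I) : Type _ := RingQuot (Rel M)

/-- The quotient map. -/
def mk (M : CoxeterMatrix I) : FreeAlgebra ℂ (Gens I) →ₐ[ℂ] A0 M :=
  RingQuot.mkAlgHom ℂ _

/-- Given a starting index `prev` and a list `[i₁, …, i_n]`, the product
`α_{prev,i₁} α_{i₁i₂} ⋯ α_{i_{n-1}i_n}` (junk value `0` if two consecutive indices coincide,
which does not occur for reduced words). -/
def bProd (M : CoxeterMatrix I) : I → List I → A0 M
  | _, [] => 1
  | prev, i :: rest =>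
      (if h : prev ≠ i then mk M (agen prev i h) else 0) * bProd M i rest

/-- The span of `1` and all products of at most `n` generators `α_{ij}` in `𝒜_{0+}`:
the `n`-th piece of the degree filtration. -/
def filtration (M : CoxeterMatrix I) (n : ℕ) : Submodule ℂ (A0 M) :=
  Submodule.span ℂ
    {z : A0 M | ∃ l : List (Gens I), l.length ≤ n ∧
      z = (l.map fun g => mk M (FreeAlgebra.ι ℂ g)).prod}

end EvenAdd
namespace TargetAlgs

variable {I : Type*}

/-- The alternating product `x * y * x * y * ⋯` with exactly `m` factors, starting with `x`. -/
def altProd {A : Type*} [Monoid A] (x y : A) : ℕ → A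
  | 0 => 1
  | m + 1 => x * altProd y x m

/-- The defining relations of `A₁`: `s_i² = 1` and `(s_i s_j - 1)^{m_{ij}} = 0`
(`m_{ij} < ∞`). -/
inductive Rel1 (M : CoxeterMatrix I) : FreeAlgebra ℂ I → FreeAlgebra ℂ I → Prop
  | sq (i : I) : Rel1 M (FreeAlgebra.ι ℂ i * FreeAlgebra.ι ℂ i) 1
  | unip (i j : I) (h : i ≠ j) (hm : M i j ≠ 0) :
      Rel1 M ((FreeAlgebra.ι ℂ i * FreeAlgebra.ι ℂ j - 1) ^ (M i j)) 0

/-- The algebra `A₁`. -/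
abbrev A1 (M : CoxeterMatrix I) : Type _ := RingQuot (Rel1 M)

/-- The image of the generator `s_i` in `A₁`. -/
def σ1 (M : CoxeterMatrix I) (i : I) : A1 M :=
  RingQuot.mkAlgHom ℂ (Rel1 M) (FreeAlgebra.ι ℂ i)

/-- The defining relations of `Ā₁`: `s_i² = 0` and
`π_{m_{ij}}(s_i,s_j) = (-1)^{m_{ij}+1} π_{m_{ij}}(s_j,s_i)` (`m_{ij} < ∞`). -/
inductive RelBar (M : CoxeterMatrix I) : FreeAlgebra ℂ I → FreeAlgebra ℂ I → Prop
  | sq (i : I) : RelBar M (FreeAlgebra.ι ℂ i * FreeAlgebra.ι ℂ i) 0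
  | braid (i j : I) (h : i ≠ j) (hm : M i j ≠ 0) :
      RelBar M (altProd (FreeAlgebra.ι ℂ i) (FreeAlgebra.ι ℂ j) (M i j))
        ((-1 : FreeAlgebra ℂ I) ^ (M i j + 1) *
          altProd (FreeAlgebra.ι ℂ j) (FreeAlgebra.ι ℂ i) (M i j))

/-- The algebra `Ā₁`. -/
abbrev A1bar (M : CoxeterMatrix I) : Type _ := RingQuot (RelBar M)

/-- The image of the generator `s_i` in `Ā₁`. -/
def σbar (M : CoxeterMatrix I) (i : I) : A1bar M :=
  RingQuot.mkAlgHom ℂ (RelBar M) (FreeAlgebra.ι ℂ i)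

/-- The subalgebra `B ⊆ Ā₁` generated by the elements `s_i - s_j`. -/
def Bsub (M : CoxeterMatrix I) : Subalgebra ℂ (A1bar M) :=
  Algebra.adjoin ℂ {z : A1bar M | ∃ i j : I, z = σbar M i - σbar M j}

end TargetAlgs

namespace Thm75
open EvenAdd TargetAlgs

variable {I : Type*} [DecidableEq I] (M : CoxeterMatrix I)

lemma mk_anti (i j : I) (h : i ≠ j) : mk M (agen i j h) = - mk M (agen j i h.symm) := by
  have h0 := RingQuot.mkAlgHom_rel ℂ (Rel.anti (M := M) i j h)
  rw [map_add, map_zero] at h0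
  exact eq_neg_of_add_eq_zero_left h0

lemma mk_nil (i j : I) (h : i ≠ j) (hm : M i j ≠ 0) : mk M (agen i j h) ^ (M i j) = 0 := by
  have h0 := RingQuot.mkAlgHom_rel ℂ (Rel.nil (M := M) i j h hm)
  rw [map_pow, map_zero] at h0
  exact h0

/-- `α_{io}` in `A0`, with the convention `α_{oo} = 0`. -/
def aOf (o i : I) : A0 M := if h : i = o then 0 else mk M (agen i o h)

lemma diff_aOf (o : I) {i j : I} (h : i ≠ j) :
    aOf M o i - aOf M o j = mk M (agen i j h) := by
  by_cases hio : i = o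
  · subst hio
    rw [aOf, dif_pos rfl, aOf, dif_neg (Ne.symm h), zero_sub, mk_anti M j i (Ne.symm h)]
    simp
  · by_cases hjo : j = o
    · subst hjo
      have hz : aOf M j j = 0 := by simp [aOf]
      have hx : aOf M j i = mk M (agen i j h) := by simp [aOf, hio]
      rw [hz, hx, sub_zero]
    · rw [aOf, dif_neg hio, aOf, dif_neg hjo]
      have h1 := RingQuot.mkAlgHom_rel ℂ (Rel.triangle (M := M) i o j hio (Ne.symm hjo) h.symm)
      rw [map_add, map_add, map_zero] at h1
      have h2 : (RingQuot.mkAlgHom ℂ (Rel M)) (agen o j (Ne.symm hjo)) =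
          - mk M (agen j o hjo) := mk_anti M o j (Ne.symm hjo)
      have h3 : (RingQuot.mkAlgHom ℂ (Rel M)) (agen j i h.symm) =
          - mk M (agen i j h) := mk_anti M j i h.symm
      rw [h2, h3] at h1
      have h4 : mk M (agen i o hio) + -mk M (agen j o hjo) + -mk M (agen i j h) = 0 := h1
      calc mk M (agen i o hio) - mk M (agen j o hjo)
          = (mk M (agen i o hio) + -mk M (agen j o hjo) + -mk M (agen i j h))
            + mk M (agen i j h) := by abel
        _ = mk M (agen i j h) := by rw [h4, zero_add]

lemma pow_diff_aOf (o : I) {i j : I} (h : i ≠ j) (hm : M i j ≠ 0) :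
    (aOf M o i - aOf M o j) ^ (M i j) = 0 := by
  rw [diff_aOf M o h]; exact mk_nil M i j h hm

/-- The operator by which `s_i` acts on `A0 × A0`. -/
def T (a : A0 M) : Module.End ℂ (A0 M × A0 M) where
  toFun v := (a * v.1 - a * a * v.2, v.1 - a * v.2)
  map_add' v w := by
    simp only [Prod.fst_add, Prod.snd_add, mul_add, Prod.mk_add_mk, Prod.mk.injEq]
    constructor <;> abel
  map_smul' c v := by
    simp only [Prod.smul_fst, Prod.smul_snd, mul_smul_comm, RingHom.id_apply, Prod.smul_mk,
      smul_sub]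

lemma T_apply (a : A0 M) (v : A0 M × A0 M) :
    T M a v = (a * v.1 - a * a * v.2, v.1 - a * v.2) := rfl

lemma T_sq (a : A0 M) : T M a * T M a = 0 := by
  apply LinearMap.ext; intro v
  rw [Module.End.mul_apply, T_apply, T_apply, LinearMap.zero_apply]
  have h1 : a * (a * v.1 - a * a * v.2) - a * a * (v.1 - a * v.2) = 0 := by
    simp only [mul_sub, mul_assoc, sub_self]
  have h2 : (a * v.1 - a * a * v.2) - a * (v.1 - a * v.2) = 0 := by
    simp only [mul_sub, mul_assoc, sub_self]
  rw [h1, h2]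
  rfl

/-- Second component of the alternating product applied to `v`. -/
def wvec : A0 M → A0 M → ℕ → A0 M × A0 M → A0 M
  | a, _, 0, v => v.1 - a * v.2
  | a, b, m + 1, v => (b - a) * wvec b a m v

lemma altProd_T (m : ℕ) : ∀ (a b : A0 M) (v : A0 M × A0 M),
    altProd (T M a) (T M b) (m + 1) v = (a * wvec M a b m v, wvec M a b m v) := by
  induction m with
  | zero =>
    intro a b v
    show (T M a * altProd (T M b) (T M a) 0) v = _
    rw [show altProd (T M b) (T M a) 0 = 1 from rfl, mul_one, T_apply]
    show _ = (a * (v.1 - a * v.2), v.1 - a * v.2)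
    rw [mul_sub, mul_assoc]
  | succ m ih =>
    intro a b v
    show (T M a * altProd (T M b) (T M a) (m + 1)) v = _
    rw [Module.End.mul_apply, ih b a v, T_apply]
    show _ = (a * ((b - a) * wvec M b a m v), (b - a) * wvec M b a m v)
    set u := wvec M b a m v
    simp only [Prod.mk.injEq]
    constructor
    · rw [sub_mul, mul_sub a (b * u) (a * u), ← mul_assoc a a u]
    · rw [sub_mul]

lemma wvec_closed (m : ℕ) : ∀ (a b : A0 M) (v : A0 M × A0 M),
    wvec M a b m v =
      (-1 : ℂ) ^ ((m + 1) / 2) •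
        ((a - b) ^ m * (v.1 - (if Even m then a else b) * v.2)) := by
  induction m with
  | zero => intro a b v; simp [wvec]
  | succ m ih =>
    intro a b v
    rw [show wvec M a b (m+1) v = (b - a) * wvec M b a m v from rfl, ih b a v]
    rw [mul_smul_comm, ← mul_assoc, ← pow_succ']
    have hba : (b - a) ^ (m + 1) = (-1 : ℂ) ^ (m + 1) • (a - b) ^ (m + 1) := by
      rw [show b - a = (-1 : ℂ) • (a - b) by module, smul_pow]
    rw [hba, smul_mul_assoc, smul_smul]
    have hif : (if Even m then b else a) = (if Even (m + 1) then a else b) := by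
      by_cases he : Even m <;> simp [he, Nat.even_add_one]
    have hsgn : (-1 : ℂ) ^ ((m + 1) / 2) * (-1 : ℂ) ^ (m + 1) = (-1 : ℂ) ^ ((m + 1 + 1) / 2) := by
      rcases Nat.even_or_odd m with ⟨k, hk⟩ | ⟨k, hk⟩
      · have e1 : (m + 1) / 2 = k := by omega
        have e2 : (m + 1 + 1) / 2 = k + 1 := by omega
        have e3 : Odd (m + 1) := ⟨k, by omega⟩
        rw [e1, e2, e3.neg_one_pow, pow_succ]
      · have e1 : (m + 1) / 2 = k + 1 := by omega
        have e2 : (m + 1 + 1) / 2 = k + 1 := by omega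
        have e3 : Even (m + 1) := ⟨k + 1, by omega⟩
        rw [e1, e2, e3.neg_one_pow, mul_one]
    rw [hif, hsgn]

lemma ring_id {R : Type*} [Ring R] (si so X Y : R) (hi : si * si = 0) (ho : so * so = 0) :
    ((si - so) * X - (si - so) * ((si - so) * Y)) + so * (X - (si - so) * Y)
      = si * (X + so * Y) := by
  simp only [sub_mul, mul_sub, mul_add, add_mul, ← mul_assoc, hi, ho, zero_mul, mul_zero]
  abel

lemma algHom_altProd {R A B : Type*} [CommSemiring R] [Semiring A] [Semiring B]
    [Algebra R A] [Algebra R B] (f : A →ₐ[R] B) :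
    ∀ (m : ℕ) (x y : A), f (altProd x y m) = altProd (f x) (f y) m := by
  intro m
  induction m with
  | zero => intro x y; exact map_one f
  | succ m ih =>
    intro x y
    rw [show altProd x y (m + 1) = x * altProd y x m from rfl, map_mul, ih y x]
    rfl

lemma braid_T (m : ℕ) (hm : m ≠ 0) (a b : A0 M) (h : (a - b) ^ m = 0) :
    altProd (T M a) (T M b) m =
      (-1 : Module.End ℂ (A0 M × A0 M)) ^ (m + 1) * altProd (T M b) (T M a) m := by
  obtain ⟨n, rfl⟩ : ∃ n, m = n + 1 := ⟨m - 1, by omega⟩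
  have hE : (-1 : Module.End ℂ (A0 M × A0 M)) = (-1 : ℂ) • 1 := by
    apply LinearMap.ext; intro v
    show -v = (-1 : ℂ) • v
    module
  apply LinearMap.ext; intro v
  rw [hE, smul_pow, one_pow, smul_mul_assoc, one_mul, LinearMap.smul_apply,
    altProd_T, altProd_T, wvec_closed, wvec_closed]
  set c₁ := if Even n then a else b with hc₁
  set c₂ := if Even n then b else a with hc₂
  have hkey : ∀ y : A0 M, (a - b) ^ n * ((a - b) * y) = 0 := by
    intro y
    rw [← mul_assoc, ← pow_succ, h, zero_mul]
  have hc : (a - b) ^ n * (v.1 - c₂ * v.2) = (a - b) ^ n * (v.1 - c₁ * v.2) := by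
    by_cases he : Even n
    · rw [hc₁, hc₂, if_pos he, if_pos he]
      have hrw : v.1 - b * v.2 = (v.1 - a * v.2) + (a - b) * v.2 := by
        rw [sub_mul]; abel
      rw [hrw, mul_add, hkey, add_zero]
    · rw [hc₁, hc₂, if_neg he, if_neg he]
      have hrw : v.1 - a * v.2 = (v.1 - b * v.2) - (a - b) * v.2 := by
        rw [sub_mul]; abel
      rw [hrw, mul_sub, hkey, sub_zero]
  have hU : (b - a) ^ n * (v.1 - c₂ * v.2) = (-1 : ℂ) ^ n • ((a - b) ^ n * (v.1 - c₁ * v.2)) := by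
    rw [show b - a = (-1 : ℂ) • (a - b) by module, smul_pow, smul_mul_assoc, hc]
  rw [hU]
  set s : ℂ := (-1 : ℂ) ^ ((n + 1) / 2) with hs
  set W := (a - b) ^ n * (v.1 - c₁ * v.2) with hW
  have habW : a * W = b * W := by
    have h0 : (a - b) * W = 0 := by
      rw [hW, ← mul_assoc, ← pow_succ', h, zero_mul]
    rw [sub_mul] at h0
    exact sub_eq_zero.mp h0
  have hsc : (-1 : ℂ) ^ (n + 1 + 1) * (s * (-1 : ℂ) ^ n) = s := by
    rw [mul_comm s, ← mul_assoc, ← pow_add,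
      Even.neg_one_pow (⟨n + 1, by omega⟩ : Even (n + 1 + 1 + n)), one_mul]
  rw [Prod.smul_mk]
  simp only [smul_smul, mul_smul_comm, Prod.mk.injEq]
  constructor
  · rw [habW, hsc]
  · rw [hsc]

/-- The representation of `Ā₁` on `A0 × A0`. -/
def ρ (o : I) : A1bar M →ₐ[ℂ] Module.End ℂ (A0 M × A0 M) :=
  RingQuot.liftAlgHom ℂ ⟨FreeAlgebra.lift ℂ (fun i => T M (aOf M o i)), by
    intro x y r
    induction r with
    | sq i =>
      rw [map_mul, map_zero, FreeAlgebra.lift_ι_apply]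
      exact T_sq M _
    | braid i j hij hmij =>
      rw [algHom_altProd, map_mul, map_pow, map_neg, map_one, algHom_altProd,
        FreeAlgebra.lift_ι_apply, FreeAlgebra.lift_ι_apply]
      exact braid_T M (M i j) hmij _ _ (pow_diff_aOf M o hij hmij)⟩

lemma ρ_σ (o i : I) : ρ M o (σbar M i) = T M (aOf M o i) := by
  have h0 : ρ M o (σbar M i)
      = (FreeAlgebra.lift ℂ (fun i => T M (aOf M o i))) (FreeAlgebra.ι ℂ i) :=
    RingQuot.liftAlgHom_mkAlgHom_apply ℂ _ _ _
  rw [h0, FreeAlgebra.lift_ι_apply]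

lemma σ_sq (i : I) : σbar M i * σbar M i = 0 := by
  have h0 := RingQuot.mkAlgHom_rel ℂ (RelBar.sq (M := M) i)
  rw [map_mul, map_zero] at h0
  exact h0

lemma aOf_self (o : I) : aOf M o o = 0 := by simp [aOf]

section Phi

variable (o : I) (φ0 : A0 M →ₐ[ℂ] A1bar M)
  (hφ0 : ∀ (i j : I) (h : i ≠ j), φ0 (mk M (agen i j h)) = σbar M i - σbar M j)

include hφ0

lemma φ_aOf (i : I) : φ0 (aOf M o i) = σbar M i - σbar M o := by
  by_cases hio : i = o
  · subst hio; rw [aOf_self, map_zero, sub_self]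
  · rw [aOf, dif_neg hio]; exact hφ0 i o hio

lemma key1 : ∀ x z : A0 M, ρ M o (φ0 x) (z, 0) = (x * z, 0) := by
  intro x
  obtain ⟨y, rfl⟩ := RingQuot.mkAlgHom_surjective ℂ (Rel M) x
  induction y using FreeAlgebra.induction with
  | grade0 r =>
    intro z
    rw [AlgHom.commutes, AlgHom.commutes, AlgHom.commutes, Module.algebraMap_end_apply,
      Prod.smul_mk, smul_zero, Algebra.smul_def]
  | grade1 g =>
    intro z
    obtain ⟨⟨i, j⟩, hij⟩ := g
    have hg : (RingQuot.mkAlgHom ℂ (Rel M)) (FreeAlgebra.ι ℂ (⟨(i, j), hij⟩ : Gens I))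
        = mk M (agen i j hij) := rfl
    rw [hg, hφ0 i j hij, map_sub, LinearMap.sub_apply, ρ_σ, ρ_σ, T_apply, T_apply]
    show (aOf M o i * z - aOf M o i * aOf M o i * 0 - (aOf M o j * z - aOf M o j * aOf M o j * 0),
      z - aOf M o i * 0 - (z - aOf M o j * 0)) = _
    simp only [mul_zero, sub_zero, sub_self]
    rw [← sub_mul, diff_aOf M o hij]
  | mul p q ihp ihq =>
    intro z
    rw [map_mul, map_mul, map_mul, Module.End.mul_apply, ihq z, ihp, mul_assoc]
  | add p q ihp ihq =>
    intro z
    rw [map_add, map_add, map_add, LinearMap.add_apply, ihp z, ihq z, add_mul,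
      Prod.mk_add_mk, add_zero]

lemma key2 : ∀ (z : A1bar M) (v : A0 M × A0 M),
    φ0 ((ρ M o z v).1) + σbar M o * φ0 ((ρ M o z v).2)
      = z * (φ0 v.1 + σbar M o * φ0 v.2) := by
  intro z
  obtain ⟨y, rfl⟩ := RingQuot.mkAlgHom_surjective ℂ (RelBar M) z
  induction y using FreeAlgebra.induction with
  | grade0 r =>
    intro v
    rw [AlgHom.commutes, AlgHom.commutes, Module.algebraMap_end_apply, Prod.smul_fst,
      Prod.smul_snd, map_smul, map_smul, ← Algebra.smul_def, smul_add, mul_smul_comm]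
  | grade1 i =>
    intro v
    have hmk : RingQuot.mkAlgHom ℂ (RelBar M) (FreeAlgebra.ι ℂ i) = σbar M i := rfl
    rw [hmk, ρ_σ, T_apply]
    show φ0 (aOf M o i * v.1 - aOf M o i * aOf M o i * v.2)
        + σbar M o * φ0 (v.1 - aOf M o i * v.2) = _
    rw [map_sub, map_mul, map_mul, map_mul, map_sub, map_mul, φ_aOf M o φ0 hφ0 i,
      mul_assoc (σbar M i - σbar M o) (σbar M i - σbar M o) (φ0 v.2)]
    exact ring_id (σbar M i) (σbar M o) (φ0 v.1) (φ0 v.2) (σ_sq M i) (σ_sq M o)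
  | mul p q ihp ihq =>
    intro v
    rw [map_mul, map_mul, Module.End.mul_apply,
      ihp (ρ M o (RingQuot.mkAlgHom ℂ (RelBar M) q) v), ihq v, ← mul_assoc]
  | add p q ihp ihq =>
    intro v
    rw [map_add, map_add, LinearMap.add_apply, Prod.fst_add, Prod.snd_add, map_add, map_add,
      mul_add, add_mul, ← ihp v, ← ihq v]
    abel

lemma mem_B : ∀ x : A0 M, φ0 x ∈ Bsub M := by
  intro x
  obtain ⟨y, rfl⟩ := RingQuot.mkAlgHom_surjective ℂ (Rel M) x
  induction y using FreeAlgebra.induction with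
  | grade0 r =>
    rw [AlgHom.commutes, AlgHom.commutes]
    exact (Bsub M).algebraMap_mem r
  | grade1 g =>
    obtain ⟨⟨i, j⟩, hij⟩ := g
    have hg : (RingQuot.mkAlgHom ℂ (Rel M)) (FreeAlgebra.ι ℂ (⟨(i, j), hij⟩ : Gens I))
        = mk M (agen i j hij) := rfl
    rw [hg, hφ0 i j hij]
    exact Algebra.subset_adjoin ⟨i, j, rfl⟩
  | mul p q ihp ihq =>
    rw [map_mul, map_mul]
    exact mul_mem ihp ihq
  | add p q ihp ihq =>
    rw [map_add, map_add]
    exact add_mem ihp ihq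

lemma B_sub_range : (Bsub M : Set (A1bar M)) ⊆ Set.range φ0 := by
  have hle : Bsub M ≤ φ0.range := by
    apply Algebra.adjoin_le
    rintro z ⟨i, j, rfl⟩
    by_cases h : i = j
    · subst h
      exact ⟨0, by rw [map_zero, sub_self]⟩
    · exact ⟨mk M (agen i j h), hφ0 i j h⟩
  intro z hz
  exact hle hz

end Phi

end Thm75

open EvenAdd TargetAlgs in
/-- Theorem 7.5 (i) and (iii) of Etingof–Rains: any algebra homomorphism
`φ₀ : 𝒜_{0+} → Ā₁` with `φ₀(α_{ij}) = s_i - s_j` is injective with image `B`, and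
`Ā₁ = B ⊕ s_o B`. -/
theorem theorem_7_5_i_iii {I : Type*} [Fintype I] [DecidableEq I] (M : CoxeterMatrix I)
    (o : I) (φ0 : A0 M →ₐ[ℂ] A1bar M)
    (hφ0 : ∀ (i j : I) (h : i ≠ j), φ0 (mk M (agen i j h)) = σbar M i - σbar M j) :
    Function.Injective φ0 ∧
    Set.range φ0 = (Bsub M : Set (A1bar M)) ∧
    (∀ z : A1bar M, ∃ x ∈ Bsub M, ∃ y ∈ Bsub M, z = x + σbar M o * y) ∧
    (∀ x ∈ Bsub M, ∀ y ∈ Bsub M, x = σbar M o * y → x = 0) := by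
  refine ⟨?_, ?_, ?_, ?_⟩
  · -- injectivity
    intro x1 x2 hx
    have e1 := Thm75.key1 M o φ0 hφ0 x1 1
    have e2 := Thm75.key1 M o φ0 hφ0 x2 1
    rw [hx, e2] at e1
    have := congrArg Prod.fst e1
    simpa using this.symm
  · -- range
    apply Set.Subset.antisymm
    · rintro _ ⟨x, rfl⟩
      exact Thm75.mem_B M φ0 hφ0 x
    · exact Thm75.B_sub_range M φ0 hφ0
  · -- decomposition
    intro z
    refine ⟨φ0 ((Thm75.ρ M o z (1, 0)).1), Thm75.mem_B M φ0 hφ0 _,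
      φ0 ((Thm75.ρ M o z (1, 0)).2), Thm75.mem_B M φ0 hφ0 _, ?_⟩
    have h := Thm75.key2 M o φ0 hφ0 z (1, 0)
    simp only [map_one, map_zero, mul_zero, add_zero, mul_one] at h
    exact h.symm
  · -- intersection is zero
    intro x hx y hy hxy
    obtain ⟨u, hu⟩ := Thm75.B_sub_range M φ0 hφ0 hx
    obtain ⟨v, hv⟩ := Thm75.B_sub_range M φ0 hφ0 hy
    have e1 : Thm75.ρ M o (φ0 u) (1, 0) = (u, 0) := by
      have := Thm75.key1 M o φ0 hφ0 u 1
      rwa [mul_one] at this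
    have e2 : Thm75.ρ M o x (1, 0) = (0, v) := by
      rw [hxy, ← hv, map_mul, Module.End.mul_apply, Thm75.key1 M o φ0 hφ0 v 1, mul_one, Thm75.ρ_σ,
        Thm75.aOf_self, Thm75.T_apply]
      simp
    rw [hu] at e1
    have e3 : ((u : A0 M), (0 : A0 M)) = (0, v) := e1.symm.trans e2
    have hu0 : u = 0 := congrArg Prod.fst e3
    rw [← hu, hu0, map_zero]
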